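/- (Liouville-type result for the truncated nonlinearity.) Let N ≥ 1 be an integer and let v : ℝ^N → ℝ be twice continuously differentiable such that for some constants C, μ > 0 one has |v(x)| + ‖∇v(x)‖ ≤ C·exp(−μ‖x‖) for all x ∈ ℝ^N. Let g : ℝ → ℝ be continuous with 0 ≤ g(s) ≤ max(s, 0)/2 for every s ∈ ℝ. If −Δv(x) + v(x) = g(v(x)) for every x ∈ ℝ^N, then v is identically zero. -/

import Mathlib

/-!
Maximum principle. A `C²` function tending to `0` at infinity that is somewhere positive attains
a positive global maximum, where each second directional derivative, hence the Laplacian, is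
`≤ 0`. But the equation gives `Δv = v - g(v) ≥ v/2 > 0` wherever `v > 0`, so `v ≤ 0`; applied
to `-v`, using `Δv = v - g(v) ≤ v < 0` wherever `v < 0`, it gives `v ≥ 0`.
-/

open MeasureTheory Metric Set Filter

/-- The Laplacian of `v : ℝ^N → ℝ`: the sum of its second partial derivatives. -/
noncomputable def lap {N : ℕ} (v : EuclideanSpace ℝ (Fin N) → ℝ)
    (x : EuclideanSpace ℝ (Fin N)) : ℝ :=
  ∑ i : Fin N, fderiv ℝ (fun y => fderiv ℝ v y (EuclideanSpace.single i (1 : ℝ))) x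
    (EuclideanSpace.single i (1 : ℝ))

open Topology

theorem IsLocalMax.deriv_deriv_nonpos {f : ℝ → ℝ} {a : ℝ} (h : IsLocalMax f a)
    (hc : ContinuousAt f a) : deriv (deriv f) a ≤ 0 := by
  by_contra! hpos
  -- a positive second derivative makes `a` also a local minimum, so `f` is locally constant
  have hmin : IsLocalMin f a := isLocalMin_of_deriv_deriv_pos hpos h.deriv_eq_zero hc
  have hconst : f =ᶠ[𝓝 a] fun _ => f a := by
    filter_upwards [h, hmin] with y hy₁ hy₂ using le_antisymm hy₁ hy₂
  have hderiv : deriv f =ᶠ[𝓝 a] fun _ => 0 := by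
    simpa using hconst.deriv
  simp [hderiv.deriv_eq] at hpos

theorem deriv_deriv_comp_add_smul {E F : Type*} [NormedAddCommGroup E] [NormedSpace ℝ E]
    [NormedAddCommGroup F] [NormedSpace ℝ F] {v : E → F} (hv : ContDiff ℝ 2 v) (x e : E) :
    deriv (deriv fun t : ℝ => v (x + t • e)) 0 = fderiv ℝ (fun y => fderiv ℝ v y e) x e := by
  have hline (t : ℝ) : HasDerivAt (fun s : ℝ => x + s • e) e t := by
    simpa using ((hasDerivAt_id t).smul_const e).const_add x
  have hfirst : deriv (fun t : ℝ => v (x + t • e)) = fun t => fderiv ℝ v (x + t • e) e := by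
    funext t
    exact (((hv.differentiable (by norm_num)) _).hasFDerivAt.comp_hasDerivAt t (hline t)).deriv
  have hsecond : Differentiable ℝ fun y => fderiv ℝ v y e :=
    ((hv.fderiv_right (m := 1) (by norm_num)).clm_apply contDiff_const).differentiable
      one_ne_zero
  rw [hfirst]
  simpa [Function.comp_def] using ((hsecond _).hasFDerivAt.comp_hasDerivAt 0 (hline 0)).deriv

theorem IsLocalMax.lap_nonpos {N : ℕ} {v : EuclideanSpace ℝ (Fin N) → ℝ}
    {x : EuclideanSpace ℝ (Fin N)} (h : IsLocalMax v x) (hv : ContDiff ℝ 2 v) : lap v x ≤ 0 := by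
  refine Finset.sum_nonpos fun i _ => ?_
  rw [← deriv_deriv_comp_add_smul hv]
  have hline : Continuous fun t : ℝ => x + t • EuclideanSpace.single i (1 : ℝ) := by fun_prop
  refine IsLocalMax.deriv_deriv_nonpos ?_ (hv.continuous.comp hline).continuousAt
  exact IsLocalMax.comp_continuous (g := fun t : ℝ => x + t • EuclideanSpace.single i (1 : ℝ))
    (by simpa using h) hline.continuousAt

theorem lap_neg {N : ℕ} (v : EuclideanSpace ℝ (Fin N) → ℝ) : lap (-v) = -lap v := by
  funext x
  simp [lap, fderiv_neg]

theorem tendsto_cocompact_zero_of_abs_le_exp {E : Type*} [NormedAddCommGroup E] [ProperSpace E]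
    {v : E → ℝ} {C μ : ℝ} (hμ : 0 < μ) (h : ∀ x, |v x| ≤ C * Real.exp (-μ * ‖x‖)) :
    Tendsto v (cocompact E) (𝓝 0) := by
  have hexponent : Tendsto (fun x : E => -μ * ‖x‖) (cocompact E) atBot :=
    tendsto_norm_cocompact_atTop.const_mul_atTop_of_neg (neg_neg_of_pos hμ)
  exact squeeze_zero_norm h (by simpa using (Real.tendsto_exp_atBot.comp hexponent).const_mul C)

theorem nonpos_of_lap_pos_of_tendsto_cocompact {N : ℕ} {v : EuclideanSpace ℝ (Fin N) → ℝ}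
    (hv : ContDiff ℝ 2 v) (hlim : Tendsto v (cocompact _) (𝓝 0))
    (hlap : ∀ x, 0 < v x → 0 < lap v x) (x : EuclideanSpace ℝ (Fin N)) : v x ≤ 0 := by
  by_contra! hx
  obtain ⟨x₀, hx₀⟩ := hv.continuous.exists_forall_ge' x
    ((hlim.eventually_lt_const hx).mono fun _ => le_of_lt)
  have hmax : IsLocalMax v x₀ := Eventually.of_forall hx₀
  exact (hmax.lap_nonpos hv).not_gt (hlap x₀ (hx.trans_le (hx₀ x)))

theorem stmt5_general (N : ℕ)
    (v : EuclideanSpace ℝ (Fin N) → ℝ) (hv : ContDiff ℝ 2 v)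
    (C μ : ℝ) (hμ : 0 < μ)
    (hdecay : ∀ x : EuclideanSpace ℝ (Fin N),
      |v x| + ‖gradient v x‖ ≤ C * Real.exp (-μ * ‖x‖))
    (g : ℝ → ℝ)
    (hgb : ∀ s : ℝ, 0 ≤ g s ∧ g s ≤ max s 0 / 2)
    (heq : ∀ x : EuclideanSpace ℝ (Fin N), -lap v x + v x = g (v x)) :
    ∀ x : EuclideanSpace ℝ (Fin N), v x = 0 := by
  have hlim : Tendsto v (cocompact _) (𝓝 0) :=
    tendsto_cocompact_zero_of_abs_le_exp hμ fun x =>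
      (le_add_of_nonneg_right (norm_nonneg _)).trans (hdecay x)
  have hlap (x) : lap v x = v x - g (v x) := by linarith [heq x]
  have hpos (x) (hx : 0 < v x) : 0 < lap v x := by
    have := (hgb (v x)).2
    rw [max_eq_left hx.le] at this
    linarith [hlap x]
  have hneg (x) (hx : 0 < (-v) x) : 0 < lap (-v) x := by
    have := (hgb (v x)).1
    simp only [Pi.neg_apply, lap_neg] at hx ⊢
    linarith [hlap x]
  intro x
  refine le_antisymm (nonpos_of_lap_pos_of_tendsto_cocompact hv hlim hpos x) ?_
  simpa using nonpos_of_lap_pos_of_tendsto_cocompact hv.neg (by simpa using hlim.neg) hneg x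

/-- Liouville-type result: a decaying classical solution of `-Δv + v = g(v)` with
`0 ≤ g(s) ≤ s⁺/2` is identically zero. -/
theorem stmt5 (N : ℕ) (hN : 1 ≤ N)
    (v : EuclideanSpace ℝ (Fin N) → ℝ) (hv : ContDiff ℝ 2 v)
    (C μ : ℝ) (hC : 0 < C) (hμ : 0 < μ)
    (hdecay : ∀ x : EuclideanSpace ℝ (Fin N),
      |v x| + ‖gradient v x‖ ≤ C * Real.exp (-μ * ‖x‖))
    (g : ℝ → ℝ) (hg : Continuous g)
    (hgb : ∀ s : ℝ, 0 ≤ g s ∧ g s ≤ max s 0 / 2)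
    (heq : ∀ x : EuclideanSpace ℝ (Fin N), -lap v x + v x = g (v x)) :
    ∀ x : EuclideanSpace ℝ (Fin N), v x = 0 :=
  stmt5_general N v hv C μ hμ hdecay g hgb heq
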